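/- Let m ≥ 1, n = 2^m, let d ≥ 1, N = n^d, and let S be a nonempty subset of (ZMod n)^d. Then there exist f ∈ S and a function G : (ZMod n)^d → ℂ whose support has cardinality at most |S|, such that every signal x : (ZMod n)^d → ℂ whose discrete Fourier transform x̂ vanishes outside S satisfies x̂(f) = N · ∑_{j ∈ (ZMod n)^d} x(j)·G(−j). -/

import Mathlib

open scoped BigOperators

/-- The `d`-dimensional discrete Fourier transform on `(ZMod n)^d`. -/
noncomputable def dft (n d : ℕ) [NeZero n] (x : (Fin d → ZMod n) → ℂ) :
    (Fin d → ZMod n) → ℂ :=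
  fun f => ∑ t : Fin d → ZMod n, x t *
    Complex.exp (-(2 * (Real.pi : ℂ) * Complex.I) *
      (((∑ q, f q * t q : ZMod n)).val : ℂ) / (n : ℂ))

/-!
Write `e(k) = exp(2πik/n)` and, for `j ∈ (ZMod n)^d`, let `v_j ∈ ℂ^S` be `v_j(g) = e(g·j)`.
Fourier inversion gives `N·x(j) = ∑_{g ∈ S} x̂(g) v_j(g)` whenever `x̂` vanishes off `S`, and
orthogonality of characters writes every indicator `δ_h ∈ ℂ^S` as a combination of the `v_j`.
A spanning family of `ℂ^S` contains a basis, so `δ_f = ∑_{j ∈ J} c_j v_j` with `|J| ≤ |S|`.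
Pairing both sides with `x̂` gives `x̂(f) = N ∑_{j ∈ J} c_j x(j)`, i.e. `G(k) = c_{-k}`.
-/

open Submodule Set Finsupp Module in
theorem exists_finsupp_card_support_le_finrank_of_mem_span {K V ι : Type*} [DivisionRing K]
    [AddCommGroup V] [Module K V] [FiniteDimensional K V] (v : ι → V) {w : V}
    (hw : w ∈ span K (range v)) :
    ∃ c : ι →₀ K, c.support.card ≤ finrank K V ∧ linearCombination K v c = w := by
  obtain ⟨b, -, -, hspan, hind⟩ :=
    exists_linearIndepOn_extension (linearIndepOn_empty K v) (subset_univ _)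
  rw [image_univ] at hspan
  obtain ⟨c, hcb, rfl⟩ := (mem_span_image_iff_linearCombination K).1 (span_le.2 hspan hw)
  refine ⟨c, ?_, rfl⟩
  have hcb' : (c.support : Set ι) ⊆ b := (mem_supported K c).1 hcb
  have := (encard_le_encard hcb').trans hind.encard_le_toENat_rank
  rwa [encard_coe_eq_coe_finsetCard, ← finrank_eq_rank, Cardinal.toENat_nat, Nat.cast_le] at this

open Finset
open ZMod (stdAddChar)

variable {n d : ℕ} [NeZero n]

lemma sum_stdAddChar_dotProduct {ι : Type*} [Fintype ι] [DecidableEq ι] (a : ι → ZMod n) :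
    ∑ t : ι → ZMod n, stdAddChar (t ⬝ᵥ a) = if a = 0 then (n : ℂ) ^ Fintype.card ι else 0 := by
  split_ifs with ha
  · simp [ha]
  obtain ⟨q, hq⟩ := Function.ne_iff.1 ha
  let χ : AddChar (ι → ZMod n) ℂ :=
    { toFun t := stdAddChar (t ⬝ᵥ a)
      map_zero_eq_one' := by simp
      map_add_eq_mul' t s := by simp only [add_dotProduct, AddChar.map_add_eq_mul] }
  refine (AddChar.sum_eq_zero_iff_ne_zero (ψ := χ)).2 (AddChar.ne_zero_iff.2 ⟨Pi.single q 1, ?_⟩)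
  rw [← (stdAddChar (N := n)).map_zero_eq_one]
  simpa [χ] using ZMod.injective_stdAddChar.ne hq

lemma dft_eq_sum_stdAddChar (x : (Fin d → ZMod n) → ℂ) (f : Fin d → ZMod n) :
    dft n d x f = ∑ t, x t * stdAddChar (-(f ⬝ᵥ t)) := by
  refine sum_congr rfl fun t _ => ?_
  rw [AddChar.map_neg_eq_inv, ZMod.stdAddChar_apply, ZMod.toCircle_apply, ← Complex.exp_neg,
    dotProduct]
  ring_nf

lemma sum_dft_mul_stdAddChar (x : (Fin d → ZMod n) → ℂ) (j : Fin d → ZMod n) :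
    ∑ g, dft n d x g * stdAddChar (g ⬝ᵥ j) = (n : ℂ) ^ d * x j := by
  have hg : ∀ g, dft n d x g * stdAddChar (g ⬝ᵥ j) = ∑ t, x t * stdAddChar (g ⬝ᵥ (j - t)) := by
    intro g
    rw [dft_eq_sum_stdAddChar, sum_mul]
    refine sum_congr rfl fun t _ => ?_
    rw [mul_assoc, ← AddChar.map_add_eq_mul, dotProduct_sub, neg_add_eq_sub]
  simp_rw [hg]
  rw [sum_comm]
  simp_rw [← mul_sum, sum_stdAddChar_dotProduct, Fintype.card_fin, sub_eq_zero, mul_ite,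
    mul_zero, sum_ite_eq, mem_univ, if_true, mul_comm]

noncomputable def fourierKernelOn (S : Finset (Fin d → ZMod n)) (j : Fin d → ZMod n) : S → ℂ :=
  fun g => stdAddChar ((g : Fin d → ZMod n) ⬝ᵥ j)

lemma single_mem_span_fourierKernelOn [DecidableEq (Fin d → ZMod n)]
    (S : Finset (Fin d → ZMod n)) (h : S) :
    Pi.single h 1 ∈ Submodule.span ℂ (Set.range (fourierKernelOn S)) := by
  have hN : ((n : ℂ) ^ d) ≠ 0 := pow_ne_zero _ (Nat.cast_ne_zero.2 (NeZero.ne n))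
  have hsingle : Pi.single h 1 =
      ∑ j, (((n : ℂ) ^ d)⁻¹ * stdAddChar (-((h : Fin d → ZMod n) ⬝ᵥ j))) • fourierKernelOn S j := by
    funext g
    have hterm : ∀ j, ((n : ℂ) ^ d)⁻¹ * stdAddChar (-((h : Fin d → ZMod n) ⬝ᵥ j)) *
        fourierKernelOn S j g = ((n : ℂ) ^ d)⁻¹ * stdAddChar (j ⬝ᵥ (g - h : Fin d → ZMod n)) := by
      intro j
      rw [fourierKernelOn, mul_assoc, ← AddChar.map_add_eq_mul, dotProduct_sub, dotProduct_comm j,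
        dotProduct_comm j, neg_add_eq_sub]
    simp only [Finset.sum_apply, Pi.smul_apply, smul_eq_mul, hterm, ← mul_sum,
      sum_stdAddChar_dotProduct, Fintype.card_fin, sub_eq_zero, Subtype.coe_inj, Pi.single_apply]
    split_ifs <;> simp [hN]
  rw [hsingle]
  exact Submodule.sum_mem _ fun j _ => Submodule.smul_mem _ _ (Submodule.subset_span ⟨j, rfl⟩)

section SpectrumIn

variable {S : Finset (Fin d → ZMod n)} {x : (Fin d → ZMod n) → ℂ}

lemma sum_dft_mul_fourierKernelOn (hx : ∀ f ∉ S, dft n d x f = 0) (j : Fin d → ZMod n) :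
    ∑ g : S, dft n d x g * fourierKernelOn S j g = (n : ℂ) ^ d * x j := by
  rw [← sum_dft_mul_stdAddChar, ← sum_subset (subset_univ S) fun g _ hg => by rw [hx g hg, zero_mul]]
  exact sum_coe_sort S fun g => dft n d x g * stdAddChar (g ⬝ᵥ j)

lemma sum_dft_mul_linearCombination_fourierKernelOn (hx : ∀ f ∉ S, dft n d x f = 0)
    (c : (Fin d → ZMod n) →₀ ℂ) :
    ∑ g : S, dft n d x g * Finsupp.linearCombination ℂ (fourierKernelOn S) c g
      = (n : ℂ) ^ d * ∑ j, x j * c j := by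
  rw [Finsupp.linearCombination_apply, Finsupp.sum_fintype _ _ (by simp)]
  simp only [Finset.sum_apply, Pi.smul_apply, smul_eq_mul, mul_sum]
  rw [sum_comm]
  refine sum_congr rfl fun j _ => ?_
  simp_rw [mul_left_comm _ (c j), ← mul_sum, sum_dft_mul_fourierKernelOn hx]
  ring

end SpectrumIn

theorem stmt6_general (n : ℕ) [NeZero n]
    (d : ℕ) (S : Finset (Fin d → ZMod n)) (hS : S.Nonempty) :
    ∃ f ∈ S, ∃ G : (Fin d → ZMod n) → ℂ,
      (Function.support G).ncard ≤ S.card ∧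
      ∀ x : (Fin d → ZMod n) → ℂ,
        (∀ f', f' ∉ S → dft n d x f' = 0) →
        dft n d x f = (n : ℂ) ^ d * ∑ j : Fin d → ZMod n, x j * G (-j) := by
  classical
  obtain ⟨f, hf⟩ := hS
  obtain ⟨c, hc_card, hc⟩ := exists_finsupp_card_support_le_finrank_of_mem_span _
    (single_mem_span_fourierKernelOn S ⟨f, hf⟩)
  rw [Module.finrank_fintype_fun_eq_card, Fintype.card_coe] at hc_card
  refine ⟨f, hf, c ∘ Neg.neg, ?_, fun x hx => ?_⟩
  · rw [Function.support_comp_eq_preimage,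
      Set.ncard_preimage_of_injective_subset_range neg_injective (by simp),
      Finsupp.fun_support_eq, Set.ncard_coe_finset]
    exact hc_card
  · simp only [Function.comp_apply, neg_neg]
    rw [← sum_dft_mul_linearCombination_fourierKernelOn hx, hc]
    simp [Pi.single_apply]

theorem stmt6 (m : ℕ) (hm : 1 ≤ m) (n : ℕ) (hn : n = 2 ^ m) [NeZero n]
    (d : ℕ) (hd : 1 ≤ d) (S : Finset (Fin d → ZMod n)) (hS : S.Nonempty) :
    ∃ f ∈ S, ∃ G : (Fin d → ZMod n) → ℂ,
      (Function.support G).ncard ≤ S.card ∧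
      ∀ x : (Fin d → ZMod n) → ℂ,
        (∀ f', f' ∉ S → dft n d x f' = 0) →
        dft n d x f = (n : ℂ) ^ d * ∑ j : Fin d → ZMod n, x j * G (-j) :=
  stmt6_general n d S hS
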